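/- arXiv:1601.02193 — 5 statements merged into one kernel-verified Lean document; each statement's English description precedes it below -/
import Mathlib

section
/- For integers k ≥ 2 and q ≥ 3, and any integer a with 1 ≤ a < q/2 and gcd(a,q) = 1, the number (ζ(k, a/q) + (-1)^k ζ(k, 1 - a/q)) / (iπ)^k lies in the q-th cyclotomic field ℚ(ζ_q). -/
/-!
Sorting `n` by its residue mod `q` gives `ζ(k, b/q) = q^k ∑_{m ≡ b (q)} m^(-k)`. The residue
conditions are detected by orthogonality of the `q`-th roots of unity, which turns
`ζ(k, a/q) + (-1)^k ζ(k, 1 - a/q)` into `q^(k-1) ∑_j ζ_q^(-aj) F(j/q)` with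
`F(x) = ∑_{m ≥ 1} (e(mx) + (-1)^k e(-mx)) / m^k = -(2πi)^k B_k(x) / k!`, the Fourier expansion
of the Bernoulli polynomial. After dividing by `(iπ)^k` each term is a power of `ζ_q` times the
rational number `-2^k q^(k-1) B_k(j/q) / k!`.
-/

open Complex

/-- The Hurwitz zeta function `ζ(k,x) = ∑_{n≥0} 1/(n+x)^k`. -/
noncomputable def hurwitz (k : ℕ) (x : ℝ) : ℝ :=
  ∑' n : ℕ, 1 / ((n : ℝ) + x) ^ k

open Finset
open scoped Nat Real

theorem IsPrimitiveRoot.sum_range_zpow_mul {K : Type*} [Field K] {ζ : K} {q : ℕ}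
    (hζ : IsPrimitiveRoot ζ q) (c : ℤ) :
    ∑ j ∈ range q, ζ ^ (c * j) = if (q : ℤ) ∣ c then (q : K) else 0 := by
  simp_rw [zpow_mul, zpow_natCast]
  split_ifs with hc
  · simp [(hζ.zpow_eq_one_iff_dvd c).mpr hc]
  · have hc1 : ζ ^ c ≠ 1 := mt (hζ.zpow_eq_one_iff_dvd c).mp hc
    have hcq : (ζ ^ c) ^ q = 1 := by
      rw [← zpow_natCast, ← zpow_mul, mul_comm, zpow_mul, zpow_natCast, hζ.pow_eq_one, one_zpow]
    rw [geom_sum_eq hc1, hcq, sub_self, zero_div]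

theorem fourier_coe_natCast_div (n : ℤ) (j q : ℕ) :
    fourier n ((j / q : ℝ) : UnitAddCircle) = exp (2 * π * I / q) ^ (n * j) := by
  rw [fourier_coe_apply, ← exp_int_mul]
  congr 1
  push_cast
  ring

theorem sum_range_zpow_mul_fourier_add_neg_one_pow_mul_fourier (k : ℕ) {q : ℕ} (hq : q ≠ 0)
    (a m : ℤ) :
    ∑ j ∈ range q, exp (2 * π * I / q) ^ (-(a * j)) *
        (fourier m ((j / q : ℝ) : UnitAddCircle) +
          (-1) ^ k * fourier (-m) ((j / q : ℝ) : UnitAddCircle)) =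
      q * ((if a ≡ m [ZMOD q] then 1 else 0) + (-1) ^ k * if -a ≡ m [ZMOD q] then 1 else 0) := by
  have hζ := isPrimitiveRoot_exp q hq
  have hζ0 : exp (2 * π * I / q) ≠ 0 := exp_ne_zero _
  have hshift (c : ℤ) (j : ℕ) : exp (2 * π * I / q) ^ (-(a * j)) * exp (2 * π * I / q) ^ (c * j) =
      exp (2 * π * I / q) ^ ((c - a) * j) := by
    rw [← zpow_add₀ hζ0]; ring_nf
  have hneg : (q : ℤ) ∣ -m - a ↔ -a ≡ m [ZMOD q] := by
    rw [Int.modEq_iff_dvd, ← dvd_neg]; ring_nf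
  simp_rw [fourier_coe_natCast_div, mul_add, mul_left_comm _ ((-1 : ℂ) ^ k), hshift,
    sum_add_distrib, ← mul_sum, hζ.sum_range_zpow_mul, hneg, ← Int.modEq_iff_dvd]
  split_ifs <;> ring

theorem hasSum_hurwitz {k : ℕ} (hk : 2 ≤ k) {x : ℝ} (hx : 0 ≤ x) :
    HasSum (fun n : ℕ => 1 / ((n : ℝ) + x) ^ k) (hurwitz k x) := by
  refine Summable.hasSum (((Real.summable_one_div_nat_add_rpow x k).mpr ?_).congr fun n => ?_)
  · exact_mod_cast hk
  · rw [abs_of_nonneg (by positivity), Real.rpow_natCast]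

theorem hasSum_ite_modEq_one_div_pow {k q b : ℕ} (hk : 2 ≤ k) (hb : b < q) :
    HasSum (fun m : ℕ => if m ≡ b [MOD q] then 1 / (m : ℂ) ^ k else 0)
      (hurwitz k (b / q) / (q : ℂ) ^ k) := by
  have hq : (q : ℂ) ≠ 0 := Nat.cast_ne_zero.mpr (by omega)
  have hinj : Function.Injective (fun n : ℕ => q * n + b) := fun m n h =>
    Nat.eq_of_mul_eq_mul_left (by omega) (Nat.add_right_cancel h)
  have hsupp : ∀ m ∉ Set.range (fun n : ℕ => q * n + b),
      (if m ≡ b [MOD q] then 1 / (m : ℂ) ^ k else 0) = 0 := by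
    intro m hm
    refine if_neg fun hmb => hm ⟨m / q, ?_⟩
    rw [Nat.ModEq, Nat.mod_eq_of_lt hb] at hmb
    simpa [hmb] using Nat.div_add_mod m q
  rw [← hinj.hasSum_iff hsupp]
  have hx : (0 : ℝ) ≤ b / q := by positivity
  refine ((Complex.hasSum_ofReal.mpr (hasSum_hurwitz hk hx)).div_const ((q : ℂ) ^ k)).congr_fun
    fun n => ?_
  rw [Function.comp_apply, if_pos (by simp [Nat.ModEq, Nat.mod_eq_of_lt hb])]
  push_cast
  rw [div_div, ← mul_pow, add_mul, div_mul_cancel₀ _ hq, mul_comm (n : ℂ)]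

theorem hurwitz_add_neg_one_pow_mul_hurwitz_one_sub {k q a : ℕ} (hk : 2 ≤ k) (ha : 1 ≤ a)
    (haq : a < q) :
    ((hurwitz k (a / q) + (-1) ^ k * hurwitz k (1 - a / q) : ℝ) : ℂ) =
      q ^ (k - 1) * ∑ j ∈ range q, exp (2 * π * I / q) ^ (-(a * j : ℤ)) *
        (-(2 * π * I) ^ k / k ! * bernoulliFun k (j / q)) := by
  have hq : q ≠ 0 := by omega
  have hsub : (1 : ℝ) - a / q = (q - a : ℕ) / q := by
    rw [Nat.cast_sub haq.le]; field_simp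
  have hres := (hasSum_ite_modEq_one_div_pow hk haq).add
    ((hasSum_ite_modEq_one_div_pow hk (by omega : q - a < q)).mul_left ((-1) ^ k))
  have hfourier := hasSum_sum fun j (hj : j ∈ range q) =>
    (hasSum_one_div_nat_pow_mul_fourier hk (x := j / q) ⟨by positivity,
      div_le_one_of_le₀ (by exact_mod_cast (mem_range.mp hj).le) (by positivity)⟩).mul_left
        (exp (2 * π * I / q) ^ (-(a * j : ℤ)))
  have hneg : -(a : ℤ) ≡ (q - a : ℕ) [ZMOD q] := by
    rw [Int.modEq_iff_dvd, Nat.cast_sub haq.le]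
    simp
  have hmodEq (m : ℕ) : ((a : ℤ) ≡ m [ZMOD q] ↔ m ≡ a [MOD q]) ∧
      (-(a : ℤ) ≡ m [ZMOD q] ↔ m ≡ q - a [MOD q]) := by
    rw [Nat.ModEq.comm, Nat.ModEq.comm (a := m), ← Int.natCast_modEq_iff, ← Int.natCast_modEq_iff]
    exact ⟨Iff.rfl, hneg.symm.trans, hneg.trans⟩
  have hpointwise (m : ℕ) : ∑ j ∈ range q, exp (2 * π * I / q) ^ (-(a * j : ℤ)) *
      (1 / (m : ℂ) ^ k * (fourier m ((j / q : ℝ) : UnitAddCircle) +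
        (-1) ^ k * fourier (-m) ((j / q : ℝ) : UnitAddCircle))) =
      q * ((if m ≡ a [MOD q] then 1 / (m : ℂ) ^ k else 0) +
        (-1) ^ k * if m ≡ q - a [MOD q] then 1 / (m : ℂ) ^ k else 0) := by
    simp_rw [mul_left_comm _ (1 / (m : ℂ) ^ k), ← mul_sum,
      sum_range_zpow_mul_fourier_add_neg_one_pow_mul_fourier k hq, (hmodEq m).1, (hmodEq m).2]
    split_ifs <;> ring
  have key := hfourier.unique ((hres.mul_left (q : ℂ)).congr_fun hpointwise)
  rw [hsub]
  push_cast
  rw [key, ← mul_assoc, ← pow_succ, Nat.sub_add_cancel (by omega)]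
  field_simp

theorem bernoulliFun_ratCast (k : ℕ) (r : ℚ) :
    bernoulliFun k r = ((Polynomial.bernoulli k).eval r : ℚ) := by
  rw [bernoulliFun, ← eq_ratCast (algebraMap ℚ ℝ), Polynomial.eval_map_algebraMap,
    Polynomial.aeval_algebraMap_apply_eq_algebraMap_eval, eq_ratCast]

theorem hurwitz_combination_mem_cyclotomic_general (k q : ℕ) (hk : 2 ≤ k)
    (a : ℕ) (ha1 : 1 ≤ a) (haq : 2 * a < q) :
    ((hurwitz k (a / q) + (-1 : ℝ) ^ k * hurwitz k (1 - a / q) : ℝ) : ℂ) /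
        (Complex.I * (Real.pi : ℂ)) ^ k ∈
      IntermediateField.adjoin ℚ
        {Complex.exp (2 * Real.pi * Complex.I / q)} := by
  have hζ := IntermediateField.mem_adjoin_simple_self ℚ (exp (2 * π * I / q))
  rw [hurwitz_add_neg_one_pow_mul_hurwitz_one_sub hk ha1 (by omega), mul_sum, sum_div]
  refine sum_mem fun j _ => ?_
  have hrat : q ^ (k - 1) * (-(2 * π * I) ^ k / k ! * bernoulliFun k (j / q)) / (I * π) ^ k =
      ((-(q ^ (k - 1) * 2 ^ k / k !) * (Polynomial.bernoulli k).eval (j / q : ℚ) : ℚ) : ℂ) := by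
    have hIπ : (I * π : ℂ) ≠ 0 := mul_ne_zero I_ne_zero (ofReal_ne_zero.mpr Real.pi_ne_zero)
    rw [show ((j / q : ℝ)) = ((j / q : ℚ) : ℝ) by push_cast; rfl, bernoulliFun_ratCast]
    field_simp
    push_cast
    ring
  rw [mul_left_comm, mul_div_assoc _ _ ((I * π : ℂ) ^ k), hrat]
  exact mul_mem (zpow_mem hζ _) (SubfieldClass.ratCast_mem _ _)

theorem hurwitz_combination_mem_cyclotomic (k q : ℕ) (hk : 2 ≤ k) (hq : 3 ≤ q)
    (a : ℕ) (ha1 : 1 ≤ a) (haq : 2 * a < q) (hcop : Nat.Coprime a q) :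
    ((hurwitz k (a / q) + (-1 : ℝ) ^ k * hurwitz k (1 - a / q) : ℝ) : ℂ) /
        (Complex.I * (Real.pi : ℂ)) ^ k ∈
      IntermediateField.adjoin ℚ
        {Complex.exp (2 * Real.pi * Complex.I / q)} :=
  hurwitz_combination_mem_cyclotomic_general k q hk a ha1 haq
end

section
/- Let k ≥ 2 be even and q ≥ 3. Let S_k(q) be the ℚ-linear span of {ζ(k,a/q)/π^k : 1 ≤ a < q, gcd(a,q) = 1} in ℝ, and let Ŝ_k(q) be the ℚ-linear span of {1} ∪ {ζ(k,a/q)/π^k : 1 ≤ a < q, gcd(a,q) = 1}. Then S_k(q) = Ŝ_k(q). -/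
open Finset ArithmeticFunction

open scoped ArithmeticFunction.Moebius

lemma summable_one_div_add_pow {k : ℕ} (hk : 1 < k) {x : ℝ} (hx : 0 < x) :
    Summable fun n : ℕ => 1 / ((n : ℝ) + x) ^ k := by
  have := (Real.summable_one_div_nat_add_rpow x k).mpr (by exact_mod_cast hk)
  refine this.congr fun n => ?_
  rw [abs_of_pos (by positivity), Real.rpow_natCast]

lemma hurwitz_pos {k : ℕ} (hk : 1 < k) {x : ℝ} (hx : 0 < x) : 0 < hurwitz k x :=
  (summable_one_div_add_pow hk hx).tsum_pos (fun _ => by positivity) 0 (by simp [hx])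

lemma ZMod.sum_val_add_one {M : Type*} [AddCommMonoid M] (m : ℕ) [NeZero m] (g : ℕ → M) :
    ∑ j : ZMod m, g (j.val + 1) = ∑ a ∈ Icc 1 m, g a := by
  refine sum_nbij' (fun j => j.val + 1) (fun a => ((a - 1 : ℕ) : ZMod m)) ?_ ?_ ?_ ?_ ?_
  · simp [Nat.succ_le_of_lt (ZMod.val_lt _)]
  · simp
  · simp
  · intro a ha
    rw [mem_Icc] at ha
    simp [ZMod.val_cast_of_lt (by omega : a - 1 < m), Nat.sub_add_cancel ha.1]
  · simp

theorem sum_Icc_hurwitz_div {k m : ℕ} (hk : 1 < k) (hm : m ≠ 0) :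
    ∑ a ∈ Icc 1 m, hurwitz k ((a : ℝ) / m) = (m : ℝ) ^ k * hurwitz k 1 := by
  have : NeZero m := ⟨hm⟩
  have hm' : (m : ℝ) ≠ 0 := Nat.cast_ne_zero.mpr hm
  have hterm : ∀ (j n : ℕ), 1 / (((j + m * n : ℕ) : ℝ) + 1) ^ k
      = ((m : ℝ) ^ k)⁻¹ * (1 / ((n : ℝ) + ((j + 1 : ℕ) : ℝ) / m) ^ k) := by
    intro j n
    have hsplit : ((j + m * n : ℕ) : ℝ) + 1 = m * (n + ((j + 1 : ℕ) : ℝ) / m) := by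
      field_simp
      push_cast
      ring
    rw [hsplit, mul_pow, one_div, mul_inv, one_div]
  have hres := Nat.sumByResidueClasses (summable_one_div_add_pow hk one_pos) m
  simp only [hterm, tsum_mul_left] at hres
  rw [← ZMod.sum_val_add_one m (fun a => hurwitz k ((a : ℝ) / m)), hurwitz, hres, ← mul_sum,
    mul_inv_cancel_left₀ (pow_ne_zero _ hm')]
  rfl

lemma sum_divisors_moebius (n : ℕ) : ∑ d ∈ n.divisors, μ d = if n = 1 then 1 else 0 := by
  rw [← coe_mul_zeta_apply, moebius_mul_coe_zeta, one_apply]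

lemma filter_divisors_dvd_eq_divisors_gcd {q : ℕ} (hq : q ≠ 0) (a : ℕ) :
    {d ∈ q.divisors | d ∣ a} = (a.gcd q).divisors := by
  rw [← Nat.divisors_filter_dvd_of_dvd hq (Nat.gcd_dvd_right a q)]
  exact filter_congr fun d hd => by
    rw [Nat.dvd_gcd_iff, and_iff_left (Nat.dvd_of_mem_divisors hd)]

lemma sum_Icc_filter_dvd {M : Type*} [AddCommMonoid M] {d q : ℕ} (hd : d ∣ q) (hq : q ≠ 0)
    (F : ℕ → M) : ∑ a ∈ Icc 1 q with d ∣ a, F a = ∑ b ∈ Icc 1 (q / d), F (d * b) := by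
  have hd0 : 0 < d := Nat.pos_of_dvd_of_pos hd (Nat.pos_of_ne_zero hq)
  refine sum_nbij' (· / d) (d * ·) ?_ ?_ ?_ ?_ ?_
  all_goals intro a ha; simp only [mem_filter, mem_Icc] at ha ⊢
  · obtain ⟨⟨ha1, haq⟩, hda⟩ := ha
    exact ⟨(Nat.one_le_div_iff hd0).mpr (Nat.le_of_dvd ha1 hda), Nat.div_le_div_right haq⟩
  · exact ⟨⟨by nlinarith, (Nat.mul_le_mul_left d ha.2).trans (Nat.mul_div_cancel' hd).le⟩,
      dvd_mul_right d a⟩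
  · exact Nat.mul_div_cancel' ha.2
  · exact Nat.mul_div_cancel_left a hd0
  · rw [Nat.mul_div_cancel' ha.2]

lemma sum_Icc_filter_coprime_eq_sum_moebius {M : Type*} [AddCommGroup M] {q : ℕ} (hq : q ≠ 0)
    (F : ℕ → M) :
    ∑ a ∈ Icc 1 q with a.Coprime q, F a =
      ∑ d ∈ q.divisors, μ d • ∑ b ∈ Icc 1 (q / d), F (d * b) := by
  have hindicator : ∀ a, (if a.Coprime q then F a else 0) =
      ∑ d ∈ q.divisors with d ∣ a, μ d • F a := by
    intro a
    rw [← sum_smul, filter_divisors_dvd_eq_divisors_gcd hq, sum_divisors_moebius]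
    split_ifs <;> simp_all [Nat.Coprime]
  calc ∑ a ∈ Icc 1 q with a.Coprime q, F a
      = ∑ a ∈ Icc 1 q, ∑ d ∈ q.divisors with d ∣ a, μ d • F a := by
        rw [sum_filter]; exact sum_congr rfl fun a _ => hindicator a
    _ = ∑ d ∈ q.divisors, μ d • ∑ a ∈ Icc 1 q with d ∣ a, F a := by
        simp only [sum_filter, smul_sum]
        rw [sum_comm]
        refine sum_congr rfl fun d _ => sum_congr rfl fun a _ => ?_
        split_ifs <;> simp
    _ = ∑ d ∈ q.divisors, μ d • ∑ b ∈ Icc 1 (q / d), F (d * b) :=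
        sum_congr rfl fun d hd => by rw [sum_Icc_filter_dvd (Nat.dvd_of_mem_divisors hd) hq]

lemma exists_rat_hurwitz_one_eq_mul_pi_pow {k : ℕ} (hk : k ≠ 0) (hkeven : Even k) :
    ∃ r : ℚ, hurwitz k 1 = r * Real.pi ^ k := by
  obtain ⟨j, rfl⟩ := hkeven
  have hj : j ≠ 0 := by omega
  refine ⟨(-1) ^ (j + 1) * 2 ^ (2 * j - 1) * bernoulli (2 * j) / (2 * j).factorial, ?_⟩
  have h := (hasSum_nat_add_iff' 1).mpr (hasSum_zeta_nat hj)
  push_cast at h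
  rw [← two_mul, hurwitz, h.tsum_eq]
  simp [hj]
  ring

lemma sum_Icc_filter_coprime_hurwitz_div {k q : ℕ} (hk : 1 < k) (hq : q ≠ 0) :
    ∑ a ∈ Icc 1 q with a.Coprime q, hurwitz k ((a : ℝ) / q) =
      ((∑ d ∈ q.divisors, μ d * ((q / d : ℕ) : ℤ) ^ k : ℤ) : ℝ) * hurwitz k 1 := by
  rw [sum_Icc_filter_coprime_eq_sum_moebius hq, Int.cast_sum, sum_mul]
  refine sum_congr rfl fun d hd => ?_
  obtain ⟨e, rfl⟩ := Nat.dvd_of_mem_divisors hd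
  have hd0 : d ≠ 0 := left_ne_zero_of_mul hq
  have he0 : e ≠ 0 := right_ne_zero_of_mul hq
  have hrescale : ∀ b : ℕ, ((d * b : ℕ) : ℝ) / (d * e : ℕ) = (b : ℝ) / e := fun b => by
    push_cast
    exact mul_div_mul_left _ _ (Nat.cast_ne_zero.mpr hd0)
  simp only [Nat.mul_div_cancel_left e (Nat.pos_of_ne_zero hd0), hrescale,
    sum_Icc_hurwitz_div hk he0, zsmul_eq_mul]
  push_cast
  ring

lemma exists_pos_rat_eq_sum_coprime_hurwitz_div_pi_pow {k q : ℕ} (hk : 2 ≤ k) (hkeven : Even k)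
    (hq : q ≠ 0) :
    ∃ c : ℚ, 0 < c ∧
      ∑ a ∈ Icc 1 q with a.Coprime q, hurwitz k ((a : ℝ) / q) / Real.pi ^ k = c := by
  obtain ⟨r, hr⟩ := exists_rat_hurwitz_one_eq_mul_pi_pow (by omega) hkeven
  set J : ℤ := ∑ d ∈ q.divisors, μ d * ((q / d : ℕ) : ℤ) ^ k
  have hsum : ∑ a ∈ Icc 1 q with a.Coprime q, hurwitz k ((a : ℝ) / q) / Real.pi ^ k = J * r := by
    rw [← sum_div, sum_Icc_filter_coprime_hurwitz_div (by omega) hq, hr]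
    field_simp
    exact mul_comm _ _
  have hpos : 0 < ∑ a ∈ Icc 1 q with a.Coprime q, hurwitz k ((a : ℝ) / q) / Real.pi ^ k := by
    refine sum_pos (fun a ha => div_pos (hurwitz_pos (by omega) ?_) (by positivity)) ⟨1, ?_⟩
    · have ha1 := (mem_Icc.mp (mem_filter.mp ha).1).1
      positivity
    · exact mem_filter.mpr ⟨mem_Icc.mpr ⟨le_rfl, Nat.one_le_iff_ne_zero.mpr hq⟩,
        Nat.coprime_one_left q⟩
  exact ⟨J * r, by exact_mod_cast hsum ▸ hpos, by push_cast; exact hsum⟩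

lemma one_mem_span_rat_of_cast_mem {s : Set ℝ} {c : ℚ} (hc : c ≠ 0)
    (h : (c : ℝ) ∈ Submodule.span ℚ s) : (1 : ℝ) ∈ Submodule.span ℚ s := by
  have hone : (1 : ℝ) = c⁻¹ • (c : ℝ) := by
    rw [Rat.smul_def, ← Rat.cast_mul, inv_mul_cancel₀ hc, Rat.cast_one]
  exact hone ▸ Submodule.smul_mem _ _ h

theorem span_eq_span_insert_one_of_even (k q : ℕ) (hk : 2 ≤ k) (hkeven : Even k)
    (hq : 3 ≤ q) :
    Submodule.span ℚ
        {x : ℝ | ∃ a : ℕ, 1 ≤ a ∧ a < q ∧ Nat.Coprime a q ∧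
          x = hurwitz k (a / q) / Real.pi ^ k} =
      Submodule.span ℚ
        (insert (1 : ℝ)
          {x : ℝ | ∃ a : ℕ, 1 ≤ a ∧ a < q ∧ Nat.Coprime a q ∧
            x = hurwitz k (a / q) / Real.pi ^ k}) := by
  refine (Submodule.span_insert_eq_span ?_).symm
  obtain ⟨c, hc, hsum⟩ := exists_pos_rat_eq_sum_coprime_hurwitz_div_pi_pow hk hkeven
    (by omega : q ≠ 0)
  refine one_mem_span_rat_of_cast_mem hc.ne' (hsum ▸ Submodule.sum_mem _ fun a ha => ?_)
  obtain ⟨ha, hcop⟩ := mem_filter.mp ha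
  obtain ⟨ha1, haq⟩ := mem_Icc.mp ha
  have hne : a ≠ q := by
    rintro rfl
    exact absurd ((Nat.coprime_self a).mp hcop) (by omega)
  exact Submodule.subset_span ⟨a, ha1, haq.lt_of_ne hne, hcop, rfl⟩
end

section
/- Let k ≥ 2 and q ≥ 3 be integers, and for r coprime to q let σ_r ∈ Gal(ℚ(ζ_q)/ℚ) be the automorphism with σ_r(ζ_q) = ζ_q^r. Define λ_a = (ζ(k,a/q) + (-1)^k ζ(k,1-a/q))/(πi)^k for gcd(a,q) = 1. Then σ_r(λ_a) = λ_{ar mod q}, where λ_a is regarded as an element of ℚ(ζ_q) via its Bernoulli-polynomial expression A·Σ_{b=1}^{q}(ζ_q^{ab} + (-1)^k ζ_q^{-ab})B_k(b/q) with A ∈ ℚ. -/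
open Complex

theorem galois_action_on_lambda (k q r : ℕ) (hk : 2 ≤ k) (hq : 3 ≤ q)
    (hr : Nat.Coprime r q)
    (z : ↥(IntermediateField.adjoin ℚ
      ({Complex.exp (2 * Real.pi * Complex.I / q)} : Set ℂ)))
    (hz : (z : ℂ) = Complex.exp (2 * Real.pi * Complex.I / q))
    (A : ℚ)
    (μ : ℕ → ↥(IntermediateField.adjoin ℚ
      ({Complex.exp (2 * Real.pi * Complex.I / q)} : Set ℂ)))
    -- `μ a` is the Bernoulli-polynomial expression for `λ_a` inside `ℚ(ζ_q)`
    (hμ : ∀ a : ℕ, μ a = (A : _) * ∑ b ∈ Finset.Icc 1 q,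
      (z ^ ((a : ℤ) * b) + (-1) ^ k * z ^ (-((a : ℤ) * b))) *
        (((Polynomial.bernoulli k).eval ((b : ℚ) / q) : ℚ) : _))
    -- `λ_a`, defined via Hurwitz zeta values, equals `μ a` as a complex number
    (hlam : ∀ a : ℕ, Nat.Coprime a q →
      ((hurwitz k (a / q) + (-1 : ℝ) ^ k * hurwitz k (1 - a / q) : ℝ) : ℂ) /
          ((Real.pi : ℂ) * Complex.I) ^ k = (μ a : ℂ))
    (σ : ↥(IntermediateField.adjoin ℚ
        ({Complex.exp (2 * Real.pi * Complex.I / q)} : Set ℂ)) ≃ₐ[ℚ]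
      ↥(IntermediateField.adjoin ℚ
        ({Complex.exp (2 * Real.pi * Complex.I / q)} : Set ℂ)))
    (hσ : σ z = z ^ r) :
    ∀ a : ℕ, Nat.Coprime a q → σ (μ a) = μ (a * r % q) := by

  intro a _
  have hq0 : q ≠ 0 := by omega
  have hzq : z ^ q = 1 := by
    have hc : ((z : ℂ)) ^ q = 1 := by
      rw [hz, ← Complex.exp_nat_mul]
      have hqc : (q : ℂ) ≠ 0 := by exact_mod_cast hq0
      have h2 : (q : ℂ) * (2 * Real.pi * Complex.I / q) = 2 * Real.pi * Complex.I := by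
        field_simp
      rw [h2]
      simpa [mul_comm, mul_assoc] using Complex.exp_two_pi_mul_I
    have : ((z ^ q : _) : ℂ) = ((1 : _) : ℂ) := by push_cast; exact hc
    exact Subtype.coe_injective this
  have hz0 : z ≠ 0 := by
    intro h
    rw [h, zero_pow hq0] at hzq
    exact zero_ne_one hzq
  have hzq' : z ^ (q : ℤ) = 1 := by rw [zpow_natCast, hzq]
  have key : ∀ m n : ℤ, m % (q : ℤ) = n % (q : ℤ) → z ^ m = z ^ n := by
    have base : ∀ m : ℤ, z ^ m = z ^ (m % (q : ℤ)) := by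
      intro m
      conv_lhs => rw [← Int.emod_add_mul_ediv m (q : ℤ)]
      rw [zpow_add₀ hz0, zpow_mul, hzq', one_zpow, mul_one]
    intro m n h
    rw [base m, base n, h]
  have cong1 : ∀ b : ℕ, ((r : ℤ) * ((a : ℤ) * b)) % (q : ℤ)
      = (((a * r % q : ℕ) : ℤ) * b) % (q : ℤ) := by
    intro b
    have h1 : ((a * r % q : ℕ) : ℤ) ≡ (a : ℤ) * r [ZMOD (q : ℤ)] := by
      push_cast
      exact (Int.emod_emod_of_dvd _ dvd_rfl)
    have h2 := h1.mul_right (b : ℤ)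
    have : (r : ℤ) * ((a : ℤ) * b) = (a : ℤ) * r * b := by ring
    rw [this]
    exact h2.symm
  rw [hμ a, hμ (a * r % q), map_mul, map_sum, map_ratCast]
  congr 1
  refine Finset.sum_congr rfl fun b _ => ?_
  rw [map_mul, map_add, map_mul, map_pow, map_neg, map_one, map_zpow₀, map_zpow₀, hσ,
    map_ratCast]
  congr 2
  · rw [← zpow_natCast z r, ← zpow_mul]
    exact key _ _ (cong1 b)
  · rw [← zpow_natCast z r, ← zpow_mul]
    have h : (r : ℤ) * -((a : ℤ) * b) = -((r : ℤ) * ((a : ℤ) * b)) := by ring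
    rw [h]
    rw [key _ _ (Int.ModEq.neg (cong1 b))]
end

section
/- Let k ≥ 2 and q ≥ 3. Assume the real numbers d^{k-1}/dz^{k-1}(π cot πz)|_{z=a/q}, for 1 ≤ a < q/2 with gcd(a,q)=1, are linearly independent over ℚ (Okada's theorem). Then the ℚ-vector space S_k(q) spanned by {ζ(k,a/q)/π^k : 1 ≤ a < q, gcd(a,q)=1} has dimension at least φ(q)/2. -/
open Real

/-!
Differentiating the Mittag-Leffler expansion `π cot πz = 1/z + ∑ₙ (1/(z-n) + 1/(z+n))` termwise
gives `d^{k-1}/dz^{k-1} (π cot πz) = (-1)^{k-1} (k-1)! (ζ(k,z) + (-1)^k ζ(k,1-z))` on `(0,1)`.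
So for `1 ≤ a < q/2` coprime to `q`, Okada's numbers divided by `π^k` are integer combinations of
`ζ(k,a/q)/π^k` and `ζ(k,(q-a)/q)/π^k`, which lie in the spanning set; this gives
`#{a < q/2 : (a,q) = 1} = φ(q)/2` linearly independent elements of `S_k(q)`.
-/

section CotangentSeries

open Set Nat

lemma summable_one_div_nat_add_pow {c : ℝ} (hc : 0 < c) {j : ℕ} (hj : 2 ≤ j) :
    Summable fun n : ℕ => 1 / ((n : ℝ) + c) ^ j := by
  refine ((Real.summable_one_div_nat_add_rpow c j).2 (by exact_mod_cast hj)).congr fun n => ?_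
  rw [abs_of_pos (by positivity), Real.rpow_natCast]

lemma hasDerivAt_one_div_add_pow (j : ℕ) {y c : ℝ} (h : y + c ≠ 0) :
    HasDerivAt (fun z => 1 / (z + c) ^ j) (-j / (y + c) ^ (j + 1)) y := by
  have e : (fun z : ℝ => 1 / (z + c) ^ j) = fun z => (z + c) ^ (-(j : ℤ)) := by ext; simp
  rw [e]
  refine ((hasDerivAt_zpow _ _ (Or.inl h)).comp_add_const y c).congr_deriv ?_
  rw [show -(j : ℤ) - 1 = -((j + 1 : ℕ) : ℤ) by push_cast; ring, zpow_neg, zpow_natCast]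
  simp [div_eq_mul_inv]

lemma hasSum_pi_mul_cot_sub_inv {x : ℝ} (hx : x ∉ range ((↑) : ℤ → ℝ)) :
    HasSum (fun n : ℕ => 1 / (x - (n + 1)) + 1 / (x + (n + 1))) (π * cot (π * x) - 1 / x) := by
  have hz : (x : ℂ) ∈ Complex.integerComplement := by
    rintro ⟨n, hn⟩
    exact hx ⟨n, by exact_mod_cast hn⟩
  rw [← Complex.hasSum_ofReal]
  convert (summable_cotTerm hz).hasSum using 1
  · ext n; push_cast; rfl
  · rw [← cot_series_rep' hz]; push_cast [Complex.ofReal_cot]; rfl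

lemma notMem_range_intCast_of_mem_Ioo {x : ℝ} (hx : x ∈ Ioo 0 1) :
    x ∉ range ((↑) : ℤ → ℝ) := by
  rintro ⟨n, rfl⟩
  have h0 : (0 : ℤ) < n := by exact_mod_cast hx.1
  have h1 : n < 1 := by exact_mod_cast hx.2
  omega

/-- `cotSeries 1` is the Mittag-Leffler expansion of `π cot πy`, and `cotSeries (m + 1)` that of
its `m`-th derivative divided by `(-1)^m m!`. -/
noncomputable def cotSeries (j : ℕ) (y : ℝ) : ℝ :=
  1 / y ^ j + ∑' n : ℕ, (1 / (y - (n + 1)) ^ j + 1 / (y + (n + 1)) ^ j)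

lemma norm_cotSeries_term_le {c y : ℝ} (hc : 0 < c) (hy : |y| ≤ 1 - c) (j n : ℕ) :
    ‖1 / (y - (n + 1)) ^ j + 1 / (y + (n + 1)) ^ j‖ ≤ 2 / (n + c) ^ j := by
  have key : ∀ z : ℝ, n + c ≤ |z| → ‖1 / z ^ j‖ ≤ 1 / (n + c) ^ j := fun z hz => by
    rw [norm_div, norm_one, norm_pow, Real.norm_eq_abs]
    gcongr
  have h₁ : n + c ≤ |y - (n + 1)| := by
    rw [abs_sub_comm]; linarith [le_abs_self ((n : ℝ) + 1 - y), le_abs_self y]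
  have h₂ : n + c ≤ |y + (n + 1)| := by linarith [le_abs_self (y + (n + 1)), neg_abs_le y]
  calc _ ≤ ‖1 / (y - (n + 1)) ^ j‖ + ‖1 / (y + (n + 1)) ^ j‖ := norm_add_le _ _
    _ ≤ 1 / (n + c) ^ j + 1 / (n + c) ^ j := add_le_add (key _ h₁) (key _ h₂)
    _ = 2 / (n + c) ^ j := by ring

lemma summable_two_div_nat_add_pow {c : ℝ} (hc : 0 < c) {j : ℕ} (hj : 2 ≤ j) :
    Summable fun n : ℕ => 2 / ((n : ℝ) + c) ^ j := by
  simpa only [mul_one_div] using (summable_one_div_nat_add_pow hc hj).mul_left 2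

lemma summable_cotSeries_term {j : ℕ} (hj : 1 ≤ j) {x : ℝ} (hx : x ∈ Ioo 0 1) :
    Summable fun n : ℕ => 1 / (x - (n + 1)) ^ j + 1 / (x + (n + 1)) ^ j := by
  obtain rfl | hj := hj.eq_or_lt
  · simpa using (hasSum_pi_mul_cot_sub_inv (notMem_range_intCast_of_mem_Ioo hx)).summable
  · refine .of_norm_bounded (summable_two_div_nat_add_pow (sub_pos.2 hx.2) hj) fun n => ?_
    exact norm_cotSeries_term_le (sub_pos.2 hx.2) (by rw [abs_of_pos hx.1]; linarith) j n

lemma hasDerivAt_cotSeries_term (j n : ℕ) {y : ℝ} (hy : |y| < 1) :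
    HasDerivAt (fun z : ℝ => 1 / (z - (n + 1)) ^ j + 1 / (z + (n + 1)) ^ j)
      (-(j : ℝ) * (1 / (y - (n + 1)) ^ (j + 1) + 1 / (y + (n + 1)) ^ (j + 1))) y := by
  have h₁ : y + -((n : ℝ) + 1) ≠ 0 := by linarith [le_abs_self y]
  have h₂ : y + ((n : ℝ) + 1) ≠ 0 := by linarith [neg_abs_le y]
  have := (hasDerivAt_one_div_add_pow j h₁).add (hasDerivAt_one_div_add_pow j h₂)
  simp only [← sub_eq_add_neg] at this
  exact this.congr_deriv (by ring)

lemma hasDerivAt_cotSeries {j : ℕ} (hj : 1 ≤ j) {x : ℝ} (hx : x ∈ Ioo 0 1) :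
    HasDerivAt (cotSeries j) (-(j : ℝ) * cotSeries (j + 1) x) x := by
  obtain ⟨c, hc, hxc⟩ : ∃ c : ℝ, 0 < c ∧ x < 1 - c :=
    ⟨(1 - x) / 2, by linarith [hx.2], by linarith [hx.2]⟩
  have habs : ∀ y ∈ Ioo 0 (1 - c), |y| ≤ 1 - c := fun y hy => by
    rw [abs_of_pos hy.1]; exact hy.2.le
  have hbound : ∀ (n : ℕ), ∀ y ∈ Ioo 0 (1 - c),
      ‖-(j : ℝ) * (1 / (y - (n + 1)) ^ (j + 1) + 1 / (y + (n + 1)) ^ (j + 1))‖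
        ≤ j * (2 / (n + c) ^ (j + 1)) := by
    intro n y hy
    rw [norm_mul, norm_neg, Real.norm_natCast]
    gcongr
    exact norm_cotSeries_term_le hc (habs y hy) _ n
  have hseries := hasDerivAt_tsum_of_isPreconnected
    ((summable_two_div_nat_add_pow hc (by omega : 2 ≤ j + 1)).mul_left (j : ℝ))
    isOpen_Ioo isPreconnected_Ioo
    (fun n y hy => hasDerivAt_cotSeries_term j n ((habs y hy).trans_lt (by linarith)))
    hbound ⟨hx.1, hxc⟩ (summable_cotSeries_term hj hx) ⟨hx.1, hxc⟩
  have hx0 : x + 0 ≠ 0 := by linarith [hx.1]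
  have := (hasDerivAt_one_div_add_pow j hx0).add hseries
  simp only [add_zero, tsum_mul_left] at this
  exact this.congr_deriv (by simp only [cotSeries]; ring)

lemma pi_mul_cot_eq_cotSeries_one {x : ℝ} (hx : x ∉ range ((↑) : ℤ → ℝ)) :
    π * cot (π * x) = cotSeries 1 x := by
  simp only [cotSeries, pow_one, (hasSum_pi_mul_cot_sub_inv hx).tsum_eq]
  ring

lemma iteratedDeriv_pi_mul_cot (m : ℕ) {x : ℝ} (hx : x ∈ Ioo 0 1) :
    iteratedDeriv m (fun z => π * cot (π * z)) x = (-1) ^ m * m ! * cotSeries (m + 1) x := by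
  induction m generalizing x with
  | zero => simpa using pi_mul_cot_eq_cotSeries_one (notMem_range_intCast_of_mem_Ioo hx)
  | succ m ih =>
    have heq : iteratedDeriv m (fun z => π * cot (π * z)) =ᶠ[nhds x]
        fun y => (-1) ^ m * m ! * cotSeries (m + 1) y :=
      Filter.eventually_of_mem (isOpen_Ioo.mem_nhds hx) fun y hy => ih hy
    rw [iteratedDeriv_succ, heq.deriv_eq,
      ((hasDerivAt_cotSeries (by omega) hx).const_mul _).deriv]
    push_cast [Nat.factorial_succ]
    ring

lemma cotSeries_eq_hurwitz {j : ℕ} (hj : 2 ≤ j) {x : ℝ} (hx : x ∈ Ioo 0 1) :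
    cotSeries j x = hurwitz j x + (-1) ^ j * hurwitz j (1 - x) := by
  have hsub : ∀ n : ℕ, 1 / (x - (n + 1)) ^ j = (-1) ^ j * (1 / ((n : ℝ) + (1 - x)) ^ j) := by
    intro n
    rw [show x - (n + 1) = -1 * (n + (1 - x)) by ring, mul_pow, one_div, mul_inv, ← inv_pow,
      inv_neg_one, one_div]
  have hadd : ∀ n : ℕ, 1 / (x + (n + 1)) ^ j = 1 / (((n + 1 : ℕ) : ℝ) + x) ^ j := by
    intro n; push_cast; ring
  have hsummable₁ := (summable_one_div_nat_add_pow (sub_pos.2 hx.2) hj).mul_left ((-1) ^ j)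
  have hsummable₂ := (summable_nat_add_iff 1).2 (summable_one_div_nat_add_pow hx.1 hj)
  rw [cotSeries, hurwitz, hurwitz, (summable_one_div_nat_add_pow hx.1 hj).tsum_eq_zero_add,
    ← tsum_mul_left]
  simp only [hsub, hadd]
  rw [Summable.tsum_add hsummable₁ hsummable₂]
  push_cast
  ring

lemma iteratedDeriv_pi_mul_cot_eq_hurwitz {k : ℕ} (hk : 2 ≤ k) {x : ℝ} (hx : x ∈ Ioo 0 1) :
    iteratedDeriv (k - 1) (fun z => π * cot (π * z)) x =
      (-1) ^ (k - 1) * (k - 1)! * hurwitz k x - (k - 1)! * hurwitz k (1 - x) := by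
  obtain ⟨m, rfl⟩ : ∃ m, k = m + 1 := ⟨k - 1, by omega⟩
  have hsq : (-1 : ℝ) ^ m * (-1) ^ m = 1 := by rw [← mul_pow]; norm_num
  rw [Nat.add_sub_cancel, iteratedDeriv_pi_mul_cot m hx, cotSeries_eq_hurwitz hk hx, pow_succ]
  linear_combination (-(m ! : ℝ) * hurwitz (m + 1) (1 - x)) * hsq

lemma iteratedDeriv_pi_mul_cot_mul_inv_mem_span {k : ℕ} (hk : 2 ≤ k) {x : ℝ} (hx : x ∈ Ioo 0 1)
    {S : Set ℝ} (h₁ : hurwitz k x / π ^ k ∈ S) (h₂ : hurwitz k (1 - x) / π ^ k ∈ S) :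
    iteratedDeriv (k - 1) (fun z => π * cot (π * z)) x * (π ^ k)⁻¹ ∈ Submodule.span ℚ S := by
  convert (Submodule.span ℚ S).add_mem
    (zsmul_mem (Submodule.subset_span h₁) ((-1) ^ (k - 1) * (k - 1)! : ℤ))
    (zsmul_mem (Submodule.subset_span h₂) (-(k - 1)! : ℤ)) using 1
  rw [iteratedDeriv_pi_mul_cot_eq_hurwitz hk hx]
  simp only [zsmul_eq_mul]
  push_cast
  ring

end CotangentSeries

open Finset in
lemma totient_le_two_mul_natCard_coprime_lt_half {q : ℕ} (hq : 3 ≤ q) :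
    q.totient ≤ 2 * Nat.card {a : ℕ // 1 ≤ a ∧ 2 * a < q ∧ a.Coprime q} := by
  have hpos : ∀ {a}, q.Coprime a → 1 ≤ a := fun {a} h =>
    Nat.pos_of_ne_zero fun ha => by rw [ha, Nat.coprime_zero_right] at h; omega
  set B := {a ∈ range q | q.Coprime a ∧ 2 * a < q}
  have hB : Nat.card {a : ℕ // 1 ≤ a ∧ 2 * a < q ∧ a.Coprime q} = #B := by
    rw [← Nat.card_eq_finsetCard]
    refine Nat.card_congr (Equiv.subtypeEquivRight fun a => ?_)
    simp only [B, mem_filter, mem_range]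
    exact ⟨fun ⟨_, h₂, h₃⟩ => ⟨by omega, h₃.symm, h₂⟩,
      fun ⟨_, h₃, h₂⟩ => ⟨hpos h₃, h₂, h₃.symm⟩⟩
  have hflip : {a ∈ range q | q.Coprime a ∧ ¬ 2 * a < q} ⊆ B.image (q - ·) := by
    intro a ha
    simp only [B, mem_filter, mem_range, mem_image] at ha ⊢
    obtain ⟨haq, hcop, hle⟩ := ha
    have hne : 2 * a ≠ q := by
      rintro rfl
      have := Nat.Coprime.eq_one_of_dvd hcop.symm (Dvd.intro_left 2 rfl)
      omega
    exact ⟨q - a, ⟨by omega, (Nat.coprime_self_sub_right haq.le).2 hcop, by omega⟩, by omega⟩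
  calc q.totient = #B + #{a ∈ range q | q.Coprime a ∧ ¬ 2 * a < q} := by
        rw [Nat.totient, ← card_filter_add_card_filter_not (fun a => 2 * a < q), filter_filter,
          filter_filter]
    _ ≤ #B + #B := add_le_add_right ((card_le_card hflip).trans card_image_le) _
    _ = 2 * Nat.card {a : ℕ // 1 ≤ a ∧ 2 * a < q ∧ a.Coprime q} := by rw [hB]; ring

lemma LinearIndependent.natCard_le_finrank_span {K V ι : Type*} [DivisionRing K] [AddCommGroup V]
    [Module K V] {v : ι → V} (hv : LinearIndependent K v) {S : Set V} (hS : S.Finite)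
    (hvS : ∀ i, v i ∈ Submodule.span K S) : Nat.card ι ≤ Module.finrank K (Submodule.span K S) := by
  have : FiniteDimensional K (Submodule.span K S) := FiniteDimensional.span_of_finite K hS
  have hw : LinearIndependent K fun i => (⟨v i, hvS i⟩ : Submodule.span K S) :=
    .of_comp (Submodule.span K S).subtype hv
  have := hw.finite
  have := Fintype.ofFinite ι
  rw [Nat.card_eq_fintype_card]
  exact hw.fintype_card_le_finrank

theorem finrank_span_hurwitz_div_pi_pow_ge (k q : ℕ) (hk : 2 ≤ k) (hq : 3 ≤ q)
    (hOkada : LinearIndependent ℚ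
      (fun a : {a : ℕ // 1 ≤ a ∧ 2 * a < q ∧ Nat.Coprime a q} =>
        iteratedDeriv (k - 1)
          (fun z : ℝ => π * (Real.cos (π * z) / Real.sin (π * z))) ((a : ℝ) / q))) :
    q.totient / 2 ≤
      Module.finrank ℚ
        ↥(Submodule.span ℚ
          {x : ℝ | ∃ a : ℕ, 1 ≤ a ∧ a < q ∧ Nat.Coprime a q ∧
            x = hurwitz k (a / q) / π ^ k}) := by
  set S := {x : ℝ | ∃ a : ℕ, 1 ≤ a ∧ a < q ∧ Nat.Coprime a q ∧ x = hurwitz k (a / q) / π ^ k}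
  simp only [← Real.cot_eq_cos_div_sin] at hOkada
  have hS : S.Finite := ((Set.finite_Iio q).image fun a : ℕ => hurwitz k (a / q) / π ^ k).subset
    (by rintro x ⟨a, -, ha, -, rfl⟩; exact ⟨a, ha, rfl⟩)
  have hmem : ∀ a : {a : ℕ // 1 ≤ a ∧ 2 * a < q ∧ a.Coprime q},
      iteratedDeriv (k - 1) (fun z => π * cot (π * z)) (a / q) * (π ^ k)⁻¹ ∈
        Submodule.span ℚ S := by
    rintro ⟨a, ha₁, ha₂, hcop⟩
    have hq0 : (0 : ℝ) < q := by exact_mod_cast (by omega : 0 < q)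
    have hsub : 1 - (a / q : ℝ) = (q - a : ℕ) / q := by
      rw [Nat.cast_sub (by omega), sub_div, div_self hq0.ne']
    refine iteratedDeriv_pi_mul_cot_mul_inv_mem_span hk
      ⟨by positivity, (div_lt_one hq0).2 (by exact_mod_cast (by omega : a < q))⟩
      ⟨a, ha₁, by omega, hcop, rfl⟩ ?_
    exact hsub ▸ ⟨q - a, by omega, by omega, (Nat.coprime_self_sub_left (by omega)).2 hcop, rfl⟩
  have hind := hOkada.map' (LinearMap.mulRight ℚ (π ^ k)⁻¹)
    (LinearMap.ker_eq_bot.2 (mul_left_injective₀ (by positivity)))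
  calc q.totient / 2 ≤ Nat.card {a : ℕ // 1 ≤ a ∧ 2 * a < q ∧ a.Coprime q} := by
        have := totient_le_two_mul_natCard_coprime_lt_half hq; omega
    _ ≤ _ := hind.natCard_le_finrank_span hS hmem
end

section
/- Suppose log α₁, …, log αₙ are logarithms of nonzero algebraic numbers that are linearly independent over ℚ. Assume Baker's theorem: 1, log α₁, …, log αₙ are then linearly independent over ℚ̄. Let L(1,χ) for each nontrivial even Dirichlet character χ mod q be expressible as a ℚ̄-linear combination of logarithms of multiplicatively independent totally real algebraic units (Ramachandra units), with the coefficient matrix invertible. Then the numbers 1 together with L(1,χ), for χ ranging over nontrivial even Dirichlet characters mod q, are linearly independent over ℚ̄. -/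
open Complex

theorem one_and_L_values_linearly_independent (q : ℕ) [NeZero q]
    -- Baker's theorem (inhomogeneous form), assumed:
    (baker : ∀ (n : ℕ) (l : Fin n → ℂ),
      (∀ j, IsAlgebraic ℚ (Complex.exp (l j))) → LinearIndependent ℚ l →
      ∀ (c₀ : ℂ) (c : Fin n → ℂ), IsAlgebraic ℚ c₀ → (∀ j, IsAlgebraic ℚ (c j)) →
        c₀ + ∑ j, c j * l j = 0 → c₀ = 0 ∧ ∀ j, c j = 0)
    (n : ℕ) (χ : Fin n → DirichletCharacter ℂ q)
    (hχ : ∀ j, χ j ≠ 1 ∧ (χ j) (-1) = 1)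
    (hinj : Function.Injective χ)
    (hsurj : ∀ ψ : DirichletCharacter ℂ q, ψ ≠ 1 → ψ (-1) = 1 → ∃ j, χ j = ψ)
    -- each `L(1,χ)` is a `ℚ̄`-linear combination of logarithms of multiplicatively
    -- independent real algebraic units, with invertible coefficient matrix:
    (ram : ∃ u : Fin n → ℝ,
      (∀ j, 0 < u j ∧ IsAlgebraic ℚ (u j) ∧ IsIntegral ℤ (u j) ∧
        IsIntegral ℤ ((u j)⁻¹)) ∧
      LinearIndependent ℚ (fun j => Real.log (u j)) ∧
      ∃ M : Matrix (Fin n) (Fin n) ℂ, (∀ i j, IsAlgebraic ℚ (M i j)) ∧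
        IsUnit M.det ∧
        ∀ i, DirichletCharacter.LFunction (χ i) 1 =
          ∑ j, M i j * (Real.log (u j) : ℂ)) :
    ∀ (c₀ : ℂ) (c : Fin n → ℂ), IsAlgebraic ℚ c₀ → (∀ j, IsAlgebraic ℚ (c j)) →
      c₀ + ∑ j, c j * DirichletCharacter.LFunction (χ j) 1 = 0 →
      c₀ = 0 ∧ ∀ j, c j = 0 := by
  obtain ⟨u, hu, hlin, M, hMalg, hMdet, hM⟩ := ram
  intro c₀ c hc₀ hc heq
  set l : Fin n → ℂ := fun j => (Real.log (u j) : ℂ) with hl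
  have hexp : ∀ j, IsAlgebraic ℚ (Complex.exp (l j)) := by
    intro j
    have h1 : Complex.exp (l j) = ((u j : ℂ)) := by
      rw [hl, ← Complex.ofReal_exp, Real.exp_log (hu j).1]
    rw [h1]
    exact (isAlgebraic_algebraMap_iff (algebraMap ℝ ℂ).injective).mpr (hu j).2.1
  have hlinC : LinearIndependent ℚ l :=
    hlin.map' ((Algebra.linearMap ℝ ℂ).restrictScalars ℚ)
      (by rw [LinearMap.ker_eq_bot]; exact fun a b h => Complex.ofReal_injective h)
  have hsum : c₀ + ∑ j, (∑ i, c i * M i j) * l j = 0 := by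
    rw [← heq]
    congr 1
    simp_rw [hM, Finset.sum_mul, Finset.mul_sum, mul_assoc]
    exact Finset.sum_comm
  have hcalg : ∀ j, IsAlgebraic ℚ (∑ i, c i * M i j) := by
    intro j
    rw [isAlgebraic_iff_isIntegral]
    exact IsIntegral.sum _ fun i _ =>
      ((isAlgebraic_iff_isIntegral.mp (hc i)).mul (isAlgebraic_iff_isIntegral.mp (hMalg i j)))
  obtain ⟨h0, hj⟩ := baker n l hexp hlinC c₀ _ hc₀ hcalg hsum
  refine ⟨h0, ?_⟩
  have hvm : Matrix.vecMul c M = 0 := by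
    funext j
    simpa [Matrix.vecMul, dotProduct] using hj j
  have hzero : c = 0 :=
    Matrix.eq_zero_of_vecMul_eq_zero (IsUnit.ne_zero hMdet) hvm
  intro j
  simp [hzero]
end
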